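/- Let S₁ = Σ_{k∈ℤ²} [(2k₁ + 1)² + (2k₂)²]^{−2}. There exist constants C > 0 and δ > 0 such that for all α > 0 and Δ > 0 with αΔ < δ, the aliased two-dimensional Matérn spectral density with ν = 1 at frequency (1/(2Δ), 0) satisfies | M_Δ((1/(2Δ), 0); 1, 2)/(4π/α²) − (S₁/π⁴) α⁴Δ⁴ | ≤ C α⁶Δ⁶. (Numerically π⁴/S₁ ≈ 43.1003.) -/

import Mathlib

/-!
At `ω = (1/(2Δ), 0)` the `k`-th aliased denominator is `Δ⁻² (t² + π² A_k)` with `t = αΔ` and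
`A_k = (2k₁ + 1)² + (2k₂)² ≥ 1`, so the normalised density is `t⁴ F(t²)` where
`F(x) = Σ_k (x + π² A_k)⁻²` and `F(0) = S₁/π⁴`. Termwise `0 ≤ b⁻² - (x + b)⁻² ≤ 2x/b³`, and
`A_k⁻³ ≤ A_k⁻²`, so `|F(t²) - F(0)| ≤ 2t² S₁/π⁶`; this gives the claim with `C = 2S₁/π⁶`
and any `δ`. Summability of `Σ A_k⁻²` follows from `A_k² ≥ 8 (k₁ + ½)² (k₂ + ½)²`.
-/

open Real

/-- `S₁ = Σ_{k∈ℤ²} [(2k₁ + 1)² + (2k₂)²]^{-2}`. -/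
noncomputable def S1 : ℝ :=
  ∑' k : ℤ × ℤ, 1 / ((2 * (k.1 : ℝ) + 1) ^ 2 + (2 * (k.2 : ℝ)) ^ 2) ^ 2

noncomputable def nyquistNormSq (k : ℤ × ℤ) : ℝ :=
  (2 * (k.1 : ℝ) + 1) ^ 2 + (2 * (k.2 : ℝ)) ^ 2

lemma one_le_sq_two_mul_intCast_add_one (n : ℤ) : 1 ≤ (2 * (n : ℝ) + 1) ^ 2 := by
  have hodd : (1 : ℝ) ≤ |2 * (n : ℝ) + 1| := by exact_mod_cast Int.one_le_abs (by omega)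
  nlinarith [sq_abs (2 * (n : ℝ) + 1)]

lemma one_le_nyquistNormSq (k : ℤ × ℤ) : 1 ≤ nyquistNormSq k := by
  unfold nyquistNormSq
  nlinarith [sq_nonneg (2 * (k.2 : ℝ)), one_le_sq_two_mul_intCast_add_one k.1]

lemma nyquistNormSq_pos (k : ℤ × ℤ) : 0 < nyquistNormSq k :=
  one_pos.trans_le (one_le_nyquistNormSq k)

lemma one_div_nyquistNormSq_sq_le (k : ℤ × ℤ) :
    1 / nyquistNormSq k ^ 2 ≤
      1 / 8 * (1 / |(k.1 : ℝ) + 1 / 2| ^ (2 : ℝ) * (1 / |(k.2 : ℝ) + 1 / 2| ^ (2 : ℝ))) := by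
  have hA : nyquistNormSq k = 4 * (((k.1 : ℝ) + 1 / 2) ^ 2 + (k.2 : ℝ) ^ 2) := by
    unfold nyquistNormSq; ring
  have hu : 1 / 4 ≤ ((k.1 : ℝ) + 1 / 2) ^ 2 := by
    nlinarith [one_le_sq_two_mul_intCast_add_one k.1]
  have hw : 1 / 4 ≤ ((k.2 : ℝ) + 1 / 2) ^ 2 := by
    nlinarith [one_le_sq_two_mul_intCast_add_one k.2]
  set u := (k.1 : ℝ) + 1 / 2
  set v := (k.2 : ℝ)
  have huv : (v + 1 / 2) ^ 2 ≤ 2 * (u ^ 2 + v ^ 2) := by nlinarith [sq_nonneg (v - 1 / 2)]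
  have hprod : u ^ 2 * (v + 1 / 2) ^ 2 ≤ (u ^ 2 + v ^ 2) * (2 * (u ^ 2 + v ^ 2)) :=
    mul_le_mul (by nlinarith) huv (by positivity) (by positivity)
  simp only [rpow_two, sq_abs, one_div_mul_one_div, hA]
  exact one_div_le_one_div_of_le (by positivity) (by nlinarith)

lemma summable_one_div_nyquistNormSq_sq : Summable fun k : ℤ × ℤ ↦ 1 / nyquistNormSq k ^ 2 := by
  have h := (Real.summable_one_div_int_add_rpow (1 / 2) 2).mpr one_lt_two
  refine ((h.mul_of_nonneg h (fun _ ↦ by positivity) (fun _ ↦ by positivity)).mul_left (1 / 8))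
    |>.of_nonneg_of_le (fun _ ↦ by positivity) one_div_nyquistNormSq_sq_le

lemma S1_eq_tsum_nyquistNormSq : S1 = ∑' k : ℤ × ℤ, 1 / nyquistNormSq k ^ 2 := rfl

lemma S1_pos : 0 < S1 :=
  summable_one_div_nyquistNormSq_sq.tsum_pos (fun _ ↦ by positivity) (0, 0)
    (one_div_pos.mpr (pow_pos (nyquistNormSq_pos _) 2))

lemma abs_one_div_add_sq_sub_one_div_sq_le {x b : ℝ} (hx : 0 ≤ x) (hb : 0 < b) :
    |1 / (x + b) ^ 2 - 1 / b ^ 2| ≤ 2 * x / b ^ 3 := by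
  have hmono : 1 / (x + b) ^ 2 ≤ 1 / b ^ 2 := by gcongr; linarith
  have hdiff : 1 / b ^ 2 - 1 / (x + b) ^ 2 = x * (x + 2 * b) / (b ^ 2 * (x + b) ^ 2) := by
    field_simp
    ring
  rw [abs_of_nonpos (by linarith), neg_sub, hdiff, div_le_div_iff₀ (by positivity) (by positivity)]
  -- the right side minus the left side is `x b² (2x² + 3xb)`
  nlinarith [mul_nonneg (mul_nonneg hx (sq_nonneg b)) (by positivity : 0 ≤ 2 * x ^ 2 + 3 * x * b)]

noncomputable def nyquistSeries (x : ℝ) : ℝ :=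
  ∑' k : ℤ × ℤ, 1 / (x + π ^ 2 * nyquistNormSq k) ^ 2

lemma summable_nyquistSeries {x : ℝ} (hx : 0 ≤ x) :
    Summable fun k : ℤ × ℤ ↦ 1 / (x + π ^ 2 * nyquistNormSq k) ^ 2 := by
  refine (summable_one_div_nyquistNormSq_sq.mul_left (1 / π ^ 4)).of_nonneg_of_le
    (fun _ ↦ by positivity) fun k ↦ ?_
  have hA := nyquistNormSq_pos k
  rw [one_div_mul_one_div, show π ^ 4 * nyquistNormSq k ^ 2 = (π ^ 2 * nyquistNormSq k) ^ 2 by ring]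
  gcongr
  linarith

lemma nyquistSeries_zero : nyquistSeries 0 = S1 / π ^ 4 := by
  rw [nyquistSeries, S1_eq_tsum_nyquistNormSq, ← tsum_div_const]
  congr 1 with k
  ring

lemma abs_nyquistSeries_sub_le {x : ℝ} (hx : 0 ≤ x) :
    |nyquistSeries x - S1 / π ^ 4| ≤ 2 * x / π ^ 6 * S1 := by
  rw [← nyquistSeries_zero, nyquistSeries, nyquistSeries,
    ← (summable_nyquistSeries hx).tsum_sub (summable_nyquistSeries le_rfl), ← Real.norm_eq_abs,
    S1_eq_tsum_nyquistNormSq]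
  refine tsum_of_norm_bounded (summable_one_div_nyquistNormSq_sq.hasSum.mul_left _) fun k ↦ ?_
  have hA := one_le_nyquistNormSq k
  calc ‖1 / (x + π ^ 2 * nyquistNormSq k) ^ 2 - 1 / (0 + π ^ 2 * nyquistNormSq k) ^ 2‖
      ≤ 2 * x / (π ^ 2 * nyquistNormSq k) ^ 3 := by
        rw [zero_add]
        exact abs_one_div_add_sq_sub_one_div_sq_le hx (by positivity)
    _ ≤ 2 * x / π ^ 6 * (1 / nyquistNormSq k ^ 2) := by
        rw [div_mul_div_comm, mul_one, mul_pow, ← pow_mul]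
        gcongr
        norm_num

lemma matern_nyquist_denom_eq {α Δ : ℝ} (hΔ : Δ ≠ 0) (k : ℤ × ℤ) :
    α ^ 2 + 4 * π ^ 2 * (1 / (2 * Δ) + (k.1 : ℝ) / Δ) ^ 2
        + 4 * π ^ 2 * ((0 : ℝ) + (k.2 : ℝ) / Δ) ^ 2
      = ((α * Δ) ^ 2 + π ^ 2 * nyquistNormSq k) / Δ ^ 2 := by
  unfold nyquistNormSq
  field_simp
  ring

lemma matern_nyquist_density_eq {α Δ : ℝ} (hα : α ≠ 0) (hΔ : Δ ≠ 0) :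
    (4 * π * α ^ 2 * ∑' k : ℤ × ℤ,
        1 / (α ^ 2 + 4 * π ^ 2 * (1 / (2 * Δ) + (k.1 : ℝ) / Δ) ^ 2
          + 4 * π ^ 2 * ((0 : ℝ) + (k.2 : ℝ) / Δ) ^ 2) ^ 2) / (4 * π / α ^ 2)
      = α ^ 4 * Δ ^ 4 * nyquistSeries ((α * Δ) ^ 2) := by
  simp_rw [matern_nyquist_denom_eq hΔ, div_pow, one_div_div, div_eq_mul_one_div ((Δ ^ 2) ^ 2)]
  rw [tsum_mul_left, nyquistSeries]
  field_simp

theorem matern_one_d2_nyquist_zero_expansion :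
    ∃ C > (0 : ℝ), ∃ δ > (0 : ℝ), ∀ α Δ : ℝ, 0 < α → 0 < Δ → α * Δ < δ →
      |(4 * π * α ^ 2 * ∑' k : ℤ × ℤ,
            1 / (α ^ 2 + 4 * π ^ 2 * (1 / (2 * Δ) + (k.1 : ℝ) / Δ) ^ 2
                + 4 * π ^ 2 * ((0 : ℝ) + (k.2 : ℝ) / Δ) ^ 2) ^ 2) / (4 * π / α ^ 2)
          - (S1 / π ^ 4) * α ^ 4 * Δ ^ 4|
        ≤ C * α ^ 6 * Δ ^ 6 := by
  refine ⟨2 * S1 / π ^ 6, by have := S1_pos; positivity, 1, one_pos, fun α Δ hα hΔ _ ↦ ?_⟩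
  have hscale : 0 ≤ α ^ 4 * Δ ^ 4 := by positivity
  rw [matern_nyquist_density_eq hα.ne' hΔ.ne', mul_assoc (S1 / π ^ 4), mul_comm (S1 / π ^ 4), ← mul_sub,
    abs_mul, abs_of_nonneg hscale]
  calc α ^ 4 * Δ ^ 4 * |nyquistSeries ((α * Δ) ^ 2) - S1 / π ^ 4|
      ≤ α ^ 4 * Δ ^ 4 * (2 * (α * Δ) ^ 2 / π ^ 6 * S1) :=
        mul_le_mul_of_nonneg_left (abs_nyquistSeries_sub_le (sq_nonneg _)) hscale
    _ = 2 * S1 / π ^ 6 * α ^ 6 * Δ ^ 6 := by ring
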